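/- Let S be a finite label set and let A and B be rooted labeled trees on S in which every internal (non-leaf) vertex has at least two children. If the cluster representations of A and B are equal as sets of subsets of S, then A and B are identical, i.e., there is a label-preserving graph isomorphism between A and B. -/

import Mathlib

/-- A rooted labeled tree on the label set `S`: a finite tree (connected acyclic simple
graph) with a distinguished root vertex, together with a bijection (`lab`, injective
with range the leaves) between `S` and its set of leaves (non-root vertices of
degree 1). -/
structure RootedLabeledTree (S : Type) : Type 1 where
  V : Type
  G : SimpleGraph V
  finite : Finite V
  isTree : G.IsTree
  root : V
  lab : S → V
  lab_inj : Function.Injective lab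
  lab_range : Set.range lab = {v : V | v ≠ root ∧ (G.neighborSet v).ncard = 1}

namespace RootedLabeledTree

variable {S : Type}

/-- Two rooted labeled trees are *identical* when there is a label-preserving
(and root-preserving) graph isomorphism between them. -/
def Identical (A B : RootedLabeledTree S) : Prop :=
  ∃ φ : A.V ≃ B.V,
    (∀ x y : A.V, B.G.Adj (φ x) (φ y) ↔ A.G.Adj x y) ∧
    φ A.root = B.root ∧ (∀ s : S, φ (A.lab s) = B.lab s)

/-- `B` is obtained from `A` by one contraction of Bourque (operation `α`): an edge
`{u,v}` of `A` is collapsed into a single new vertex which is adjacent to all former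
neighbours of `u` and of `v`; all other vertices and adjacencies are kept, and the
root and the leaf labels are preserved. -/
def ContractsTo (A B : RootedLabeledTree S) : Prop :=
  ∃ (u v : A.V) (_ : A.G.Adj u v) (φ : A.V → B.V),
    Function.Surjective φ ∧ φ u = φ v ∧
    (∀ x y : A.V, φ x = φ y → x = y ∨ s(x, y) = s(u, v)) ∧
    (∀ x y : A.V, B.G.Adj (φ x) (φ y) ↔
      ∃ x' y' : A.V, φ x' = φ x ∧ φ y' = φ y ∧ A.G.Adj x' y' ∧ s(x', y') ≠ s(u, v)) ∧
    φ A.root = B.root ∧ (∀ s : S, φ (A.lab s) = B.lab s)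

/-- One step: a contraction of Bourque or a decontraction of Bourque (the inverse
operation). -/
def BourqueStep (A B : RootedLabeledTree S) : Prop :=
  ContractsTo A B ∨ ContractsTo B A

/-- The Robinson–Foulds distance `d'_RF`: the minimum number of contractions and
decontractions of Bourque transforming `A` into a tree identical to `B`. -/
noncomputable def dRF (A B : RootedLabeledTree S) : ℕ :=
  sInf {n : ℕ | ∃ f : ℕ → RootedLabeledTree S,
    f 0 = A ∧ Identical (f n) B ∧ ∀ i < n, BourqueStep (f i) (f (i + 1))}

/-- `u` lies on the (unique) path from `r` to `v` in `G`. -/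
def onPath {V : Type} (G : SimpleGraph V) (r u v : V) : Prop :=
  ∀ p : G.Path r v, u ∈ p.1.support

/-- The cluster of the clade of a vertex `v`: the set of labels of the leaves lying in
the clade of `v` (i.e. the leaves whose path to the root passes through `v`). -/
def cluster (A : RootedLabeledTree S) (v : A.V) : Set S :=
  {s : S | onPath A.G A.root v (A.lab s)}

/-- The cluster representation of a rooted labeled tree: the set of clusters of all of
its clades. -/
def clusterRep (A : RootedLabeledTree S) : Set (Set S) :=
  Set.range (cluster A)

end RootedLabeledTree

open RootedLabeledTree

namespace RootedLabeledTree

open SimpleGraph Walk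
open scoped Classical

variable {S : Type} (T : RootedLabeledTree S)

/-- The unique path from the root to `v`. -/
noncomputable def pth (v : T.V) : T.G.Walk T.root v :=
  (T.isTree.existsUnique_path T.root v).choose

lemma pth_isPath (v : T.V) : (T.pth v).IsPath :=
  (T.isTree.existsUnique_path T.root v).choose_spec.1

lemma walk_eq {a b : T.V} {p q : T.G.Walk a b} (hp : p.IsPath) (hq : q.IsPath) : p = q :=
  congrArg Subtype.val (T.isTree.IsAcyclic.path_unique ⟨p, hp⟩ ⟨q, hq⟩)

lemma path_eq {v : T.V} {p : T.G.Walk T.root v} (hp : p.IsPath) : p = T.pth v :=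
  T.walk_eq hp (T.pth_isPath v)

/-- `u` is an ancestor (or equal) of `v`. -/
def anc (u v : T.V) : Prop := u ∈ (T.pth v).support

lemma onPath_anc {u v : T.V} : onPath T.G T.root u v ↔ T.anc u v := by
  constructor
  · intro h; exact h ⟨T.pth v, T.pth_isPath v⟩
  · intro h p
    have : p.1 = T.pth v := T.path_eq p.2
    rw [this]; exact h

lemma anc_self (v : T.V) : T.anc v v := (T.pth v).end_mem_support

lemma anc_root (v : T.V) : T.anc T.root v := (T.pth v).start_mem_support

lemma pth_root : T.pth T.root = Walk.nil := (T.walk_eq (T.pth_isPath _) IsPath.nil).symm ▸ rfl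

lemma pth_prefix {u v : T.V} (h : T.anc u v) : T.pth u = (T.pth v).takeUntil u h :=
  T.walk_eq (T.pth_isPath u) ((T.pth_isPath v).takeUntil h)

lemma anc_trans {w u v : T.V} (h1 : T.anc w u) (h2 : T.anc u v) : T.anc w v := by
  have := T.pth_prefix h2
  unfold anc at h1 ⊢
  rw [this] at h1
  exact (T.pth v).support_takeUntil_subset h2 h1

lemma anc_antisymm {u v : T.V} (h1 : T.anc u v) (h2 : T.anc v u) : u = v := by
  have e1 : (T.pth u).length + ((T.pth v).dropUntil u h1).length = (T.pth v).length := by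
    conv_rhs => rw [← (T.pth v).take_spec h1]
    rw [Walk.length_append, T.pth_prefix h1]
  have e2 : (T.pth v).length + ((T.pth u).dropUntil v h2).length = (T.pth u).length := by
    conv_rhs => rw [← (T.pth u).take_spec h2]
    rw [Walk.length_append, T.pth_prefix h2]
  exact Walk.eq_of_length_eq_zero
    (show ((T.pth v).dropUntil u h1).length = 0 by omega)

lemma concat_isPath {x y : T.V} (h : T.G.Adj x y) (hy : y ∉ (T.pth x).support) :
    ((T.pth x).concat h).IsPath := by
  rw [Walk.isPath_def, Walk.support_concat]
  rw [List.nodup_append]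
  exact ⟨(T.pth_isPath x).support_nodup, List.nodup_singleton y,
    fun a ha b hb e => hy (by rw [List.mem_singleton] at hb; rw [← hb, ← e]; exact ha)⟩

lemma pth_concat {x y : T.V} (h : T.G.Adj x y) (hy : y ∉ (T.pth x).support) :
    T.pth y = (T.pth x).concat h :=
  (T.path_eq (T.concat_isPath h hy)).symm

lemma not_mem_of_pth_concat {x y : T.V} (h : T.G.Adj x y)
    (hc : T.pth y = (T.pth x).concat h) : y ∉ (T.pth x).support := by
  intro hy
  have := (T.pth_isPath y).support_nodup
  rw [hc, Walk.support_concat] at this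
  rw [List.nodup_append] at this
  exact this.2.2 y hy y (by simp) rfl

lemma anc_of_pth_concat {x y : T.V} (h : T.G.Adj x y)
    (hc : T.pth y = (T.pth x).concat h) : T.anc x y := by
  unfold anc
  rw [hc, Walk.support_concat, List.mem_append]
  exact Or.inl (T.pth x).end_mem_support

lemma adj_cases {x y : T.V} (h : T.G.Adj x y) :
    T.pth y = (T.pth x).concat h ∨ T.pth x = (T.pth y).concat h.symm := by
  by_cases hy : y ∈ (T.pth x).support
  · right
    have hx : x ∉ (T.pth y).support := by
      intro hx
      exact h.ne (T.anc_antisymm hx hy)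
    exact T.pth_concat h.symm hx
  · left; exact T.pth_concat h hy

/-- On the path to `y`, the vertex after `x` (given `x` strictly above `y`). -/
lemma exists_child {x y : T.V} (hxy : T.anc x y) (hne : x ≠ y) :
    ∃ c, ∃ h : T.G.Adj x c, T.pth c = (T.pth x).concat h ∧ T.anc c y := by
  obtain ⟨c, h, d', hd⟩ := Walk.exists_eq_cons_of_ne hne ((T.pth y).dropUntil x hxy)
  have hcd : c ∈ ((T.pth y).dropUntil x hxy).support.tail := by
    rw [hd]; simpa using d'.start_mem_support
  have hcy : T.anc c y :=
    (T.pth y).support_dropUntil_subset hxy (List.mem_of_mem_tail hcd)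
  have hnodup := (T.pth_isPath y).support_nodup
  have hsplit : (T.pth y).support
      = ((T.pth y).takeUntil x hxy).support ++ ((T.pth y).dropUntil x hxy).support.tail := by
    conv_lhs => rw [← (T.pth y).take_spec hxy]
    rw [Walk.support_append]
  rw [hsplit, List.nodup_append] at hnodup
  have hcx : c ∉ (T.pth x).support := by
    rw [T.pth_prefix hxy]
    intro hc
    exact hnodup.2.2 c hc c hcd rfl
  exact ⟨c, h, T.pth_concat h hcx, hcy⟩

/-- A non-root vertex with a unique neighbour is not strictly above any vertex. -/
lemma eq_of_leaf_anc {x y : T.V} (hx1 : x ≠ T.root) (hx2 : (T.G.neighborSet x).ncard = 1)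
    (hxy : T.anc x y) : x = y := by
  by_contra hne
  obtain ⟨c, hadj, hconc, -⟩ := T.exists_child hxy hne
  -- parent of x
  obtain ⟨a, ha, q, hq⟩ := Walk.exists_eq_cons_of_ne hx1 ((T.pth x).reverse)
  have hax : a ∈ (T.pth x).support := by
    have : a ∈ (T.pth x).reverse.support := by
      rw [hq, Walk.support_cons]
      exact List.mem_cons_of_mem _ q.start_mem_support
    rwa [Walk.support_reverse, List.mem_reverse] at this
  have hcx : c ∉ (T.pth x).support := T.not_mem_of_pth_concat hadj hconc
  have hac : a ≠ c := fun e => hcx (e ▸ hax)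
  have hlt : 1 < (T.G.neighborSet x).ncard := by
    haveI := T.finite
    rw [Set.one_lt_ncard_iff (Set.toFinite _)]
    exact ⟨a, c, ha, hadj, hac⟩
  omega

lemma anc_total {x y ℓ : T.V} (hx : T.anc x ℓ) (hy : T.anc y ℓ) :
    T.anc x y ∨ T.anc y x := by
  by_cases hxy : x ∈ ((T.pth ℓ).takeUntil y hy).support
  · left
    unfold anc
    rw [T.pth_prefix hy]
    exact hxy
  · right
    have hsplit : (T.pth ℓ).support
        = ((T.pth ℓ).takeUntil y hy).support ++ ((T.pth ℓ).dropUntil y hy).support.tail := by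
      conv_lhs => rw [← (T.pth ℓ).take_spec hy]
      rw [Walk.support_append]
    have hxd : x ∈ ((T.pth ℓ).dropUntil y hy).support.tail := by
      have hxs : x ∈ (T.pth ℓ).support := hx
      rw [hsplit, List.mem_append] at hxs
      tauto
    set d := (T.pth ℓ).dropUntil y hy with hd
    have hdpath : d.IsPath := (T.pth_isPath ℓ).dropUntil hy
    have hxd' : x ∈ d.support := List.mem_of_mem_tail hxd
    set q := ((T.pth ℓ).takeUntil y hy).append (d.takeUntil x hxd') with hqdef
    have hq : q.IsPath := by
      rw [Walk.isPath_def, Walk.support_append]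
      have h1 : (((T.pth ℓ).takeUntil y hy)).support.Nodup :=
        ((T.pth_isPath ℓ).takeUntil hy).support_nodup
      have h2 : (d.takeUntil x hxd').support.Nodup :=
        (hdpath.takeUntil hxd').support_nodup
      have hnodupl := (T.pth_isPath ℓ).support_nodup
      rw [hsplit, List.nodup_append] at hnodupl
      rw [List.nodup_append]
      have hcons := (d.takeUntil x hxd').support_eq_cons
      refine ⟨h1, ?_, ?_⟩
      · rw [hcons, List.nodup_cons] at h2
        exact h2.2
      · intro a hal a' har e
        subst e
        have ha1 : a ∈ (d.takeUntil x hxd').support := List.mem_of_mem_tail har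
        have hay : a ≠ y := by
          intro e
          rw [hcons, List.nodup_cons] at h2
          exact h2.1 (e ▸ har)
        have ha2 : a ∈ d.support := d.support_takeUntil_subset hxd' ha1
        have ha3 : a ∈ d.support.tail := by
          rw [d.support_eq_cons, List.mem_cons] at ha2
          tauto
        exact hnodupl.2.2 a hal a ha3 rfl
    have hqx : q = T.pth x := T.path_eq hq
    show y ∈ (T.pth x).support
    rw [← hqx, hqdef, Walk.mem_support_append_iff]
    exact Or.inl (Walk.end_mem_support _)

lemma mem_cluster {v : T.V} {s : S} : s ∈ cluster T v ↔ T.anc v (T.lab s) :=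
  T.onPath_anc

lemma cluster_mono {u v : T.V} (h : T.anc v u) : cluster T u ⊆ cluster T v := fun _ hs =>
  T.mem_cluster.2 (T.anc_trans h (T.mem_cluster.1 hs))

lemma mem_cluster_root (s : S) : s ∈ cluster T T.root := T.mem_cluster.2 (T.anc_root _)

lemma cluster_lab (s : S) : cluster T (T.lab s) = {s} := by
  ext t
  simp only [Set.mem_singleton_iff]
  constructor
  · intro ht
    have hanc := T.mem_cluster.1 ht
    have hmem : T.lab s ∈ Set.range T.lab := ⟨s, rfl⟩
    rw [T.lab_range] at hmem
    exact (T.lab_inj (T.eq_of_leaf_anc hmem.1 hmem.2 hanc)).symm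
  · rintro rfl
    exact T.mem_cluster.2 (T.anc_self _)

lemma exists_leaf_or_trivial (v : T.V) :
    (∃ s : S, s ∈ cluster T v) ∨ (∀ w : T.V, w = T.root) := by
  haveI := T.finite
  haveI : Fintype T.V := Fintype.ofFinite _
  obtain ⟨u, hu, hmax⟩ := Finset.exists_max_image
    (Finset.univ.filter fun w => T.anc v w) (fun w => (T.pth w).length)
    ⟨v, by simp [T.anc_self v]⟩
  simp only [Finset.mem_filter, Finset.mem_univ, true_and] at hu
  have hmax' : ∀ w, T.anc v w → (T.pth w).length ≤ (T.pth u).length := by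
    intro w hw
    exact hmax w (by simp [hw])
  by_cases hur : u = T.root
  · right
    subst hur
    have hv : v = T.root := by
      have hvm : v ∈ (T.pth T.root).support := hu
      rw [T.pth_root] at hvm
      simpa using hvm
    intro w
    have hw : T.anc v w := hv ▸ T.anc_root w
    have hlen := hmax' w hw
    rw [T.pth_root] at hlen
    simp only [Walk.length_nil, Nat.le_zero] at hlen
    exact (Walk.eq_of_length_eq_zero hlen).symm
  · left
    obtain ⟨a, ha, qa, hqa⟩ := Walk.exists_eq_cons_of_ne hur ((T.pth u).reverse)
    have hau : T.pth u = (T.pth a).concat ha.symm := by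
      rcases T.adj_cases ha with h1 | h1
      · exfalso
        have hanc : T.anc u a := T.anc_of_pth_concat ha h1
        have hlen : (T.pth a).length = (T.pth u).length + 1 := by
          rw [h1, Walk.length_concat]
        have := hmax' a (T.anc_trans hu hanc)
        omega
      · exact h1
    have hns : T.G.neighborSet u = {a} := by
      ext w
      simp only [SimpleGraph.mem_neighborSet, Set.mem_singleton_iff]
      constructor
      · intro hw
        rcases T.adj_cases hw with h1 | h1
        · exfalso
          have hanc : T.anc u w := T.anc_of_pth_concat hw h1
          have hlen : (T.pth w).length = (T.pth u).length + 1 := by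
            rw [h1, Walk.length_concat]
          have := hmax' w (T.anc_trans hu hanc)
          omega
        · obtain ⟨hv, -⟩ := Walk.concat_inj (h1.symm.trans hau)
          exact hv
      · rintro rfl
        exact ha
    have hleaf : (T.G.neighborSet u).ncard = 1 := by
      rw [hns]
      exact Set.ncard_singleton a
    have hrange : u ∈ Set.range T.lab := by
      rw [T.lab_range]
      exact ⟨hur, hleaf⟩
    obtain ⟨s, rfl⟩ := hrange
    exact ⟨s, T.mem_cluster.2 hu⟩

lemma anc_of_subset
    (hT : ∀ v : T.V, ¬(v ≠ T.root ∧ (T.G.neighborSet v).ncard = 1) →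
      2 ≤ {w : T.V | T.G.Adj v w ∧ onPath T.G T.root v w}.ncard)
    (hne : ∀ v : T.V, ∃ s : S, s ∈ cluster T v)
    {x y : T.V} (hsub : cluster T x ⊆ cluster T y) : T.anc y x := by
  obtain ⟨s, hs⟩ := hne x
  have hx : T.anc x (T.lab s) := T.mem_cluster.1 hs
  have hy : T.anc y (T.lab s) := T.mem_cluster.1 (hsub hs)
  rcases T.anc_total hx hy with hxy | hyx
  swap
  · exact hyx
  by_cases hxy0 : x = y
  · subst hxy0
    exact T.anc_self x
  exfalso
  have hequal : cluster T x = cluster T y :=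
    Set.Subset.antisymm hsub (T.cluster_mono hxy)
  have hint : ¬(x ≠ T.root ∧ (T.G.neighborSet x).ncard = 1) := by
    rintro ⟨h1, h2⟩
    exact hxy0 (T.eq_of_leaf_anc h1 h2 hxy)
  have h2c := hT x hint
  obtain ⟨c, hadj, hconc, hcy⟩ := T.exists_child hxy hxy0
  have hcmem : c ∈ {w : T.V | T.G.Adj x w ∧ onPath T.G T.root x w} :=
    ⟨hadj, T.onPath_anc.2 (T.anc_of_pth_concat hadj hconc)⟩
  obtain ⟨c', hc'mem, hc'c⟩ := Set.exists_ne_of_one_lt_ncard (lt_of_lt_of_le one_lt_two h2c) c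
  obtain ⟨hadj', honc'⟩ := hc'mem
  have hanc' : T.anc x c' := T.onPath_anc.1 honc'
  have hconc' : T.pth c' = (T.pth x).concat hadj' := by
    rcases T.adj_cases hadj' with h1 | h1
    · exact h1
    · exact absurd (T.anc_antisymm hanc' (T.anc_of_pth_concat hadj'.symm h1)) hadj'.ne
  obtain ⟨s', hs'⟩ := hne c'
  have hs'x : s' ∈ cluster T x := T.cluster_mono hanc' hs'
  have hs'c : s' ∈ cluster T c := T.cluster_mono hcy (hequal ▸ hs'x)
  have h1 : T.anc c (T.lab s') := T.mem_cluster.1 hs'c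
  have h2' : T.anc c' (T.lab s') := T.mem_cluster.1 hs'
  rcases T.anc_total h1 h2' with hcc | hcc
  · have hmem : c ∈ (T.pth c').support := hcc
    rw [hconc', Walk.support_concat, List.mem_append] at hmem
    rcases hmem with hm | hm
    · exact T.not_mem_of_pth_concat hadj hconc hm
    · exact hc'c ((show c = c' by simpa using hm).symm)
  · have hmem : c' ∈ (T.pth c).support := hcc
    rw [hconc, Walk.support_concat, List.mem_append] at hmem
    rcases hmem with hm | hm
    · exact T.not_mem_of_pth_concat hadj' hconc' hm
    · exact hc'c (show c' = c by simpa using hm)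

lemma subset_iff_anc
    (hT : ∀ v : T.V, ¬(v ≠ T.root ∧ (T.G.neighborSet v).ncard = 1) →
      2 ≤ {w : T.V | T.G.Adj v w ∧ onPath T.G T.root v w}.ncard)
    (hne : ∀ v : T.V, ∃ s : S, s ∈ cluster T v)
    {x y : T.V} : cluster T x ⊆ cluster T y ↔ T.anc y x :=
  ⟨T.anc_of_subset hT hne, T.cluster_mono⟩

lemma adj_iff_cover {x y : T.V} :
    T.G.Adj x y ↔
      ((T.anc x y ∧ x ≠ y ∧ ∀ z, T.anc x z → T.anc z y → z = x ∨ z = y) ∨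
       (T.anc y x ∧ y ≠ x ∧ ∀ z, T.anc y z → T.anc z x → z = y ∨ z = x)) := by
  constructor
  · intro hadj
    rcases T.adj_cases hadj with h1 | h1
    · left
      refine ⟨T.anc_of_pth_concat hadj h1, hadj.ne, ?_⟩
      intro z hxz hzy
      have hzy' : z ∈ (T.pth y).support := hzy
      rw [h1, Walk.support_concat, List.mem_append] at hzy'
      rcases hzy' with hz | hz
      · exact Or.inl (T.anc_antisymm hz hxz)
      · right
        simpa using hz
    · right
      refine ⟨T.anc_of_pth_concat hadj.symm h1, hadj.ne.symm, ?_⟩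
      intro z hyz hzx
      have hzx' : z ∈ (T.pth x).support := hzx
      rw [h1, Walk.support_concat, List.mem_append] at hzx'
      rcases hzx' with hz | hz
      · exact Or.inl (T.anc_antisymm hz hyz)
      · right
        simpa using hz
  · intro hcov
    rcases hcov with ⟨hxy, hnexy, hcov⟩ | ⟨hyx, hnexy, hcov⟩
    · obtain ⟨c, hadj, hconc, hcy⟩ := T.exists_child hxy hnexy
      rcases hcov c (T.anc_of_pth_concat hadj hconc) hcy with hc | hc
      · exact absurd hc.symm hadj.ne
      · exact hc ▸ hadj
    · obtain ⟨c, hadj, hconc, hcx⟩ := T.exists_child hyx hnexy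
      rcases hcov c (T.anc_of_pth_concat hadj hconc) hcx with hc | hc
      · exact absurd hc.symm hadj.ne
      · exact (hc ▸ hadj).symm

end RootedLabeledTree


/-- If every internal (non-leaf) vertex of the rooted labeled trees
`A` and `B` has at least two children (children of `v`: the neighbours of `v` that are
farther from the root), and the cluster representations of `A` and `B` coincide as sets
of subsets of `S`, then `A` and `B` are identical: there is a label-preserving graph
isomorphism between them. -/
theorem identical_of_clusterRep_eq {S : Type} [Fintype S]
    (A B : RootedLabeledTree S)
    (hA : ∀ v : A.V, ¬(v ≠ A.root ∧ (A.G.neighborSet v).ncard = 1) →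
      2 ≤ {w : A.V | A.G.Adj v w ∧ onPath A.G A.root v w}.ncard)
    (hB : ∀ v : B.V, ¬(v ≠ B.root ∧ (B.G.neighborSet v).ncard = 1) →
      2 ≤ {w : B.V | B.G.Adj v w ∧ onPath B.G B.root v w}.ncard)
    (h : clusterRep A = clusterRep B) :
    Identical A B := by
  classical
  by_cases htriv : ∀ w : A.V, w = A.root
  · have hS : IsEmpty S := by
      constructor
      intro s
      have hmem : A.lab s ∈ Set.range A.lab := ⟨s, rfl⟩
      rw [A.lab_range] at hmem
      exact hmem.1 (htriv _)
    have htrivB : ∀ w : B.V, w = B.root := by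
      rcases B.exists_leaf_or_trivial B.root with ⟨s, -⟩ | h2
      · exact (hS.false s).elim
      · exact h2
    refine ⟨⟨fun _ => B.root, fun _ => A.root, fun a => (htriv a).symm,
      fun b => (htrivB b).symm⟩, ?_, rfl, fun s => (hS.false s).elim⟩
    intro x y
    have hx := htriv x
    have hy := htriv y
    subst hx hy
    show B.G.Adj B.root B.root ↔ A.G.Adj A.root A.root
    constructor
    · intro hadj
      exact absurd hadj (SimpleGraph.irrefl B.G)
    · intro hadj
      exact absurd hadj (SimpleGraph.irrefl A.G)
  · push_neg at htriv
    have hneA : ∀ v : A.V, ∃ s, s ∈ cluster A v := by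
      intro v
      rcases A.exists_leaf_or_trivial v with h1 | h1
      · exact h1
      · obtain ⟨w, hw⟩ := htriv
        exact (hw (h1 w)).elim
    have hSne : Nonempty S := by
      obtain ⟨s, -⟩ := hneA A.root
      exact ⟨s⟩
    have hneB : ∀ v : B.V, ∃ s, s ∈ cluster B v := by
      intro v
      rcases B.exists_leaf_or_trivial v with h1 | h1
      · exact h1
      · obtain ⟨s⟩ := hSne
        have hmem : B.lab s ∈ Set.range B.lab := ⟨s, rfl⟩
        rw [B.lab_range] at hmem
        exact (hmem.1 (h1 _)).elim
    have hfex : ∀ v : A.V, ∃ w : B.V, cluster B w = cluster A v := by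
      intro v
      have hm : cluster A v ∈ clusterRep B := by
        rw [← h]
        exact ⟨v, rfl⟩
      exact hm
    choose f hf using hfex
    have hgex : ∀ w : B.V, ∃ v : A.V, cluster A v = cluster B w := by
      intro w
      have hm : cluster B w ∈ clusterRep A := by
        rw [h]
        exact ⟨w, rfl⟩
      exact hm
    choose g hg using hgex
    have injA : ∀ {x y : A.V}, cluster A x = cluster A y → x = y := by
      intro x y hxy
      exact A.anc_antisymm (A.anc_of_subset hA hneA hxy.ge) (A.anc_of_subset hA hneA hxy.le)
    have injB : ∀ {x y : B.V}, cluster B x = cluster B y → x = y := by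
      intro x y hxy
      exact B.anc_antisymm (B.anc_of_subset hB hneB hxy.ge) (B.anc_of_subset hB hneB hxy.le)
    have hgf : ∀ v, g (f v) = v := fun v => injA ((hg (f v)).trans (hf v))
    have hfg : ∀ w, f (g w) = w := fun w => injB ((hf (g w)).symm ▸ (hg w) ▸ rfl)
    refine ⟨⟨f, g, hgf, hfg⟩, ?_, ?_, ?_⟩
    · have hanc : ∀ x y : A.V, B.anc (f x) (f y) ↔ A.anc x y := by
        intro x y
        rw [← B.subset_iff_anc hB hneB, hf, hf, A.subset_iff_anc hA hneA]
      have hnef : ∀ x y : A.V, f x ≠ f y ↔ x ≠ y := by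
        intro x y
        constructor
        · intro hne e
          exact hne (e ▸ rfl)
        · intro hne e
          exact hne (by rw [← hgf x, e, hgf])
      have hcov : ∀ x y : A.V,
          ((∀ z, B.anc (f x) z → B.anc z (f y) → z = f x ∨ z = f y) ↔
           (∀ z, A.anc x z → A.anc z y → z = x ∨ z = y)) := by
        intro x y
        constructor
        · intro hb z h1 h2
          rcases hb (f z) ((hanc x z).2 h1) ((hanc z y).2 h2) with e | e
          · left
            rw [← hgf z, e, hgf]
          · right
            rw [← hgf z, e, hgf]
        · intro ha z h1 h2
          have h1' : A.anc x (g z) := (hanc x (g z)).1 (by rw [hfg]; exact h1)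
          have h2' : A.anc (g z) y := (hanc (g z) y).1 (by rw [hfg]; exact h2)
          rcases ha (g z) h1' h2' with e | e
          · left
            rw [← hfg z, e]
          · right
            rw [← hfg z, e]
      intro x y
      rw [A.adj_iff_cover, B.adj_iff_cover]
      simp only [Equiv.coe_fn_mk]
      rw [hanc x y, hanc y x, hnef x y, hnef y x, hcov x y, hcov y x]
    · show f A.root = B.root
      apply injB
      rw [hf]
      ext s
      exact iff_of_true (A.mem_cluster_root s) (B.mem_cluster_root s)
    · intro s
      show f (A.lab s) = B.lab s
      apply injB
      rw [hf, A.cluster_lab, B.cluster_lab]
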